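/- Let d, n, m be natural numbers with d ≥ 1, let W_{ij} ∈ ℝ^d for 0 ≤ i ≤ n and 0 ≤ j ≤ m, and let c be a real number. Define the rectangular Bézier surface S_{nm}(t,u) := Σ_{i=0}^{n} Σ_{j=0}^{m} B^n_i(t) B^m_j(u) W_{ij} and the subdivided control points V_{ij} := Σ_{k=0}^{i} B^i_k(c) W_{kj} for 0 ≤ i ≤ n and 0 ≤ j ≤ m. Then for all real numbers t and u, Σ_{i=0}^{n} Σ_{j=0}^{m} B^n_i(t) B^m_j(u) V_{ij} = S_{nm}(c·t, u); that is, the surface with control points V_{ij} parametrizes the left part S_{nm}([0,c] × [0,1]) when (t,u) ranges over [0,1]². -/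

import Mathlib

/-!
The subdivision rests on the identity `∑ᵢ Bⁿᵢ(t) Bⁱₖ(c) = Bⁿₖ(ct)`: for `k ≤ i` the product
`C(n,i) C(i,k)` equals `C(n,k) C(n-k,i-k)`, so after pulling out `C(n,k) (ct)ᵏ` the remaining sum
is the binomial expansion of `(t(1-c) + (1-t))ⁿ⁻ᵏ = (1-ct)ⁿ⁻ᵏ`. Substituting `V`, exchanging the
order of summation and applying this identity in the first parameter direction turns the
left-hand side into the surface evaluated at `(ct, u)`.
-/

/-- The `i`-th Bernstein basis polynomial of degree `n`:
`B^n_i(t) = C(n,i) * t^i * (1-t)^(n-i)`. -/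
noncomputable def bern (n i : ℕ) (t : ℝ) : ℝ :=
  (n.choose i : ℝ) * t ^ i * (1 - t) ^ (n - i)

open Finset

lemma bern_eq_zero_of_lt {n i : ℕ} (h : n < i) (t : ℝ) : bern n i t = 0 := by
  simp [bern, Nat.choose_eq_zero_of_lt h]

lemma bern_mul_bern_add (n k j : ℕ) (t c : ℝ) :
    bern n (k + j) t * bern (k + j) k c =
      n.choose k * (c * t) ^ k * ((t * (1 - c)) ^ j * (1 - t) ^ (n - k - j) * (n - k).choose j) := by
  have hchoose : (n.choose (k + j) * (k + j).choose k : ℝ) = n.choose k * (n - k).choose j := by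
    exact_mod_cast (Nat.choose_mul (Nat.le_add_right k j)).trans (by rw [Nat.add_sub_cancel_left])
  rw [bern, bern, Nat.add_sub_cancel_left, Nat.sub_sub, mul_pow, mul_pow, pow_add]
  linear_combination (t ^ k * t ^ j * (1 - t) ^ (n - (k + j)) * c ^ k * (1 - c) ^ j) * hchoose

theorem sum_bern_mul_bern (n k : ℕ) (t c : ℝ) :
    ∑ i ∈ range (n + 1), bern n i t * bern i k c = bern n k (c * t) := by
  rcases lt_or_ge n k with hnk | hkn
  · rw [bern_eq_zero_of_lt hnk]
    exact sum_eq_zero fun i hi => by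
      rw [bern_eq_zero_of_lt (n := i) (by simp at hi; omega), mul_zero]
  calc ∑ i ∈ range (n + 1), bern n i t * bern i k c
      = ∑ i ∈ Ico k (n + 1), bern n i t * bern i k c := by
        refine (sum_subset (fun i hi => by simp at hi ⊢; omega) fun i hi hik => ?_).symm
        rw [bern_eq_zero_of_lt (n := i) (by simp at hi hik; omega), mul_zero]
    _ = ∑ j ∈ range (n - k + 1), bern n (k + j) t * bern (k + j) k c := by
        rw [sum_Ico_eq_sum_range, show n + 1 - k = n - k + 1 by omega]
    _ = n.choose k * (c * t) ^ k * (t * (1 - c) + (1 - t)) ^ (n - k) := by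
        rw [add_pow, mul_sum]
        exact sum_congr rfl fun j _ => bern_mul_bern_add n k j t c
    _ = bern n k (c * t) := by rw [bern]; ring_nf

lemma sum_range_bern_smul_eq_of_le {E : Type*} [AddCommMonoid E] [Module ℝ E] {i n : ℕ}
    (hin : i ≤ n) (c : ℝ) (f : ℕ → E) :
    ∑ k ∈ range (i + 1), bern i k c • f k = ∑ k ∈ range (n + 1), bern i k c • f k :=
  sum_subset (range_subset_range.2 (by omega)) fun k _ hk => by
    rw [bern_eq_zero_of_lt (by simpa using hk), zero_smul]

theorem sum_bern_smul_subdivision {E : Type*} [AddCommMonoid E] [Module ℝ E]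
    (n : ℕ) (t c : ℝ) (f : ℕ → E) :
    ∑ i ∈ range (n + 1), bern n i t • ∑ k ∈ range (i + 1), bern i k c • f k =
      ∑ k ∈ range (n + 1), bern n k (c * t) • f k := calc
  _ = ∑ i ∈ range (n + 1), ∑ k ∈ range (n + 1), (bern n i t * bern i k c) • f k :=
      sum_congr rfl fun i hi => by
        rw [sum_range_bern_smul_eq_of_le (mem_range_succ_iff.1 hi), smul_sum]
        simp only [mul_smul]
  _ = ∑ k ∈ range (n + 1), bern n k (c * t) • f k := by
      rw [sum_comm]
      simp only [← sum_smul, sum_bern_mul_bern]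

theorem bezier_surface_left_part_general
    (d n m : ℕ) (W : ℕ → ℕ → (Fin d → ℝ)) (c : ℝ)
    (S : ℝ → ℝ → (Fin d → ℝ))
    (hS : ∀ t u : ℝ, S t u = ∑ i ∈ Finset.range (n + 1), ∑ j ∈ Finset.range (m + 1),
      (bern n i t * bern m j u) • W i j)
    (V : ℕ → ℕ → (Fin d → ℝ))
    (hV : ∀ i ≤ n, ∀ j ≤ m, V i j = ∑ k ∈ Finset.range (i + 1), bern i k c • W k j) :
    ∀ t u : ℝ,
      ∑ i ∈ Finset.range (n + 1), ∑ j ∈ Finset.range (m + 1),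
        (bern n i t * bern m j u) • V i j = S (c * t) u := by
  intro t u
  calc _ = ∑ j ∈ range (m + 1), bern m j u •
          ∑ i ∈ range (n + 1), bern n i t • ∑ k ∈ range (i + 1), bern i k c • W k j := by
        rw [sum_comm]
        refine sum_congr rfl fun j hj => ?_
        rw [smul_sum]
        refine sum_congr rfl fun i hi => ?_
        rw [hV i (mem_range_succ_iff.1 hi) j (mem_range_succ_iff.1 hj), mul_comm, mul_smul]
    _ = S (c * t) u := by
        simp only [sum_bern_smul_subdivision]
        simp only [hS, smul_sum, smul_smul]
        rw [sum_comm]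
        simp only [mul_comm]

theorem bezier_surface_left_part
    (d n m : ℕ) (hd : 1 ≤ d) (W : ℕ → ℕ → (Fin d → ℝ)) (c : ℝ)
    (S : ℝ → ℝ → (Fin d → ℝ))
    (hS : ∀ t u : ℝ, S t u = ∑ i ∈ Finset.range (n + 1), ∑ j ∈ Finset.range (m + 1),
      (bern n i t * bern m j u) • W i j)
    (V : ℕ → ℕ → (Fin d → ℝ))
    (hV : ∀ i ≤ n, ∀ j ≤ m, V i j = ∑ k ∈ Finset.range (i + 1), bern i k c • W k j) :
    ∀ t u : ℝ,
      ∑ i ∈ Finset.range (n + 1), ∑ j ∈ Finset.range (m + 1),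
        (bern n i t * bern m j u) • V i j = S (c * t) u :=
  bezier_surface_left_part_general d n m W c S hS V hV
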